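/- Let $\Field$ be a field and $R$ a commutative ring. Define $\St_{\GL_2}(\Field;R)$ to be the kernel of the augmentation map from the free $R$-module on the set $\mathbb{P}^1(\Field)$ (the projective line over $\Field$, viewed as a discrete set) to $R$. Then the coinvariants of $\St_{\GL_2}(\Field;R)$ under the natural action of $\SL_2(\Field)$ vanish: $(\St_{\GL_2}(\Field;R))_{\SL_2(\Field)} = 0$. -/

import Mathlib

/-!
The kernel of the augmentation is spanned by the differences `[p] - [q]`. Given `p ≠ q`, pick a
third point `r` and, by 2-transitivity of `SL₂(F)` on `ℙ¹(F)`, elements `g, h` with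
`g • (p, q) = (p, r)` and `h • (p, q) = (r, q)`; for `z = [p] - [q]` of augmentation zero,
`[p] - [q] = -(g • z - z) - (h • z - z)`.
-/

open Projectivization
open scoped LinearAlgebra.Projectivization

/-- The action of `g ∈ SL₂(F)` on the projective line `ℙ¹(F)` (the set of lines in `F²`). -/
noncomputable def pact {F : Type*} [Field F] (g : Matrix.SpecialLinearGroup (Fin 2) F) :
    ℙ F (Fin 2 → F) → ℙ F (Fin 2 → F) :=
  Projectivization.map ((Matrix.SpecialLinearGroup.toLin' g).toLinearMap : (Fin 2 → F) →ₗ[F] (Fin 2 → F))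
    (Matrix.SpecialLinearGroup.toLin' g).injective

/-- The augmentation map `R[ℙ¹(F)] → R`, whose kernel is the Steinberg module
`St_{GL₂}(F;R) = H̃₀(ℙ¹(F);R)`. -/
noncomputable def aug (F R : Type*) [Field F] [CommRing R] :
    (ℙ F (Fin 2 → F) →₀ R) →ₗ[R] R :=
  Finsupp.linearCombination R (fun _ => (1 : R))

theorem pact_eq_smul {F : Type*} [Field F] (g : Matrix.SpecialLinearGroup (Fin 2) F) :
    pact g = (g • ·) :=
  rfl

theorem Projectivization.exists_ne_and_ne_fin_two {K : Type*} [DivisionRing K]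
    (p q : ℙ K (Fin 2 → K)) : ∃ r, r ≠ p ∧ r ≠ q := by
  classical
  open scoped OnePoint in
  let e := OnePoint.equivProjectivization K
  have h3 : ({e ∞, e (0 : K), e (1 : K)} : Finset _).card = 3 :=
    Finset.card_eq_three.mpr ⟨_, _, _, e.injective.ne (OnePoint.infty_ne_coe _),
      e.injective.ne (OnePoint.infty_ne_coe _),
      e.injective.ne (OnePoint.coe_injective.ne zero_ne_one), rfl⟩
  obtain ⟨r, -, hr⟩ := Finset.exists_mem_notMem_of_card_lt_card (s := {p, q})
    (t := {e ∞, e (0 : K), e (1 : K)}) (h3 ▸ Finset.card_le_two.trans_lt (by norm_num))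
  exact ⟨r, by simpa using hr⟩

namespace Finsupp

variable {X R : Type*} [CommRing R]

theorem ker_linearCombination_one_le {S : Submodule R (X →₀ R)}
    (hS : ∀ p q : X, single p 1 - single q 1 ∈ S) :
    LinearMap.ker (linearCombination R fun _ : X => (1 : R)) ≤ S := by
  intro x hx
  rcases isEmpty_or_nonempty X with _ | ⟨⟨p₀⟩⟩
  · simp [Subsingleton.elim x 0]
  have hsum : x.sum (fun _ r => r) = 0 := by simpa [linearCombination_apply] using hx
  have hx : x = x.sum fun p r => r • (single p 1 - single p₀ 1) := by
    simp only [smul_sub, smul_single_one, sum_sub, sum_single, ← single_sum, hsum, single_zero,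
      sub_zero]
  rw [hx]
  exact Submodule.finsuppSum_mem _ _ _ _ fun p _ => S.smul_mem _ (hS p p₀)

end Finsupp

open Finsupp in
theorem MulAction.ker_linearCombination_one_le_span_mapDomain_smul_sub {G X R : Type*} [Group G]
    [MulAction G X] [IsMultiplyPretransitive G X 2] [CommRing R]
    (hX : ∀ p q : X, ∃ r, r ≠ p ∧ r ≠ q) :
    LinearMap.ker (linearCombination R fun _ : X => (1 : R)) ≤ Submodule.span R
      {y | ∃ (g : G) (z : X →₀ R), z ∈ LinearMap.ker (linearCombination R fun _ : X => (1 : R)) ∧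
          y = mapDomain (g • ·) z - z} := by
  refine ker_linearCombination_one_le fun p q => ?_
  obtain rfl | hpq := eq_or_ne p q
  · simp
  obtain ⟨r, hrp, hrq⟩ := hX p q
  obtain ⟨g, hgp, hgq⟩ := is_two_pretransitive_iff.mp ‹_› hpq hrp.symm
  obtain ⟨h, hhp, hhq⟩ := is_two_pretransitive_iff.mp ‹_› hpq hrq
  set z : X →₀ R := single p 1 - single q 1
  have hz : z ∈ LinearMap.ker (linearCombination R fun _ : X => (1 : R)) := by simp [z]
  have hz_eq : z = -(mapDomain (g • ·) z - z) - (mapDomain (h • ·) z - z) := by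
    simp only [z, mapDomain_sub, mapDomain_single, hgp, hgq, hhp, hhq]
    abel
  rw [hz_eq]
  exact sub_mem (neg_mem (Submodule.subset_span ⟨g, z, hz, rfl⟩))
    (Submodule.subset_span ⟨h, z, hz, rfl⟩)

theorem steinberg_gl2_coinvariants_vanish (F R : Type*) [Field F] [CommRing R]
    (x : ℙ F (Fin 2 → F) →₀ R) (hx : x ∈ LinearMap.ker (aug F R)) :
    x ∈ Submodule.span R
      {y : ℙ F (Fin 2 → F) →₀ R | ∃ (g : Matrix.SpecialLinearGroup (Fin 2) F)
        (z : ℙ F (Fin 2 → F) →₀ R), z ∈ LinearMap.ker (aug F R) ∧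
          y = Finsupp.mapDomain (pact g) z - z} := by
  simp only [pact_eq_smul]
  exact MulAction.ker_linearCombination_one_le_span_mapDomain_smul_sub
    exists_ne_and_ne_fin_two hx
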